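/- Assume P^s, P^u, P^c are continuous on K. Let ω be a continuous covector field on K and ψ : K → ℝ continuous such that along every orbit x_t in K, t ↦ ψ(x_t) is differentiable with d/dt ψ(x_t) = ω(x_t)(F(x_t)). Define 𝒮(ω,ψ)(x) := ∫₀^∞ ω(φ^t x) ∘ P^s(φ^t x) ∘ Dφ^t(x) dt − ∫₀^∞ ω(φ^{-t} x) ∘ P^u(φ^{-t} x) ∘ Dφ^{-t}(x) dt − ψ(x) ε^c(x). Then both integrals converge absolutely, ν := 𝒮(ω,ψ) is bounded on K, and along every orbit x_t := φ^t(x₀) in K, t ↦ ν(x_t) is differentiable with d/dt ν(x_t) = −ν(x_t) ∘ DF(x_t) − ω(x_t), and ν(x_t)(F(x_t)) = −ψ(x_t) for all t. -/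

import Mathlib

/-!
Pull `ν` back along an orbit. By the cocycle identity `Dφ^(u+s)(x) = Dφ^u(φ^s x) ∘ Dφ^s(x)` and
the equivariance of the splitting,
`ν(φ^s x₀) ∘ Dφ^s(x₀) = ∫_s^∞ ω∘P^s∘Dφ^u(x₀) du - ∫_{-∞}^s ω∘P^u∘Dφ^u(x₀) du - ψ(φ^s x₀) ε^c(x₀)`,
where `ε^c(φ^s x₀) ∘ Dφ^s(x₀) = ε^c(x₀)` because `Dφ^s` carries `F` to `F`. The fundamental theorem
of calculus and `P^s + P^u + P^c = 1` show that this has derivative `-ω(φ^s x₀) ∘ Dφ^s(x₀)`, and the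
variational equation `d/ds Dφ^s = DF ∘ Dφ^s` (differentiating `Dφ^(-s)` as an inverse) turns this
into the adjoint equation for `ν`. Convergence and boundedness come from the exponential bounds on
the integrands and from `‖ε^c‖ = ‖P^c‖ / ‖F‖`, with `‖F‖` bounded below on `K`. Finally
`ν(F) = -ψ` because `P^s` and `P^u` kill the centre direction `F`.
-/

open Function Set Filter MeasureTheory Topology

section HalfLine

lemma integrableOn_const_rpow_Ioi_zero {lam : ℝ} (hlam0 : 0 < lam) (hlam1 : lam < 1) :
    IntegrableOn (fun t : ℝ => lam ^ t) (Ioi 0) := by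
  simp_rw [Real.rpow_def_of_pos hlam0]
  exact integrableOn_exp_mul_Ioi (Real.log_neg hlam0 hlam1) 0

lemma integral_const_rpow_Ioi_zero {lam : ℝ} (hlam0 : 0 < lam) (hlam1 : lam < 1) :
    ∫ t in Ioi (0 : ℝ), lam ^ t = -(Real.log lam)⁻¹ := by
  simp_rw [Real.rpow_def_of_pos hlam0]
  rw [integral_exp_mul_Ioi (Real.log_neg hlam0 hlam1), mul_zero, Real.exp_zero, neg_div,
    one_div]

variable {G : Type*} [NormedAddCommGroup G]

lemma integrableOn_Ioi_of_norm_le_rpow {f : ℝ → G} (hf : Continuous f) {M lam : ℝ}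
    (hlam0 : 0 < lam) (hlam1 : lam < 1) (hfM : ∀ t, 0 ≤ t → ‖f t‖ ≤ M * lam ^ t) (a : ℝ) :
    IntegrableOn f (Ioi a) := by
  have h0 : IntegrableOn f (Ioi 0) := by
    refine ((integrableOn_const_rpow_Ioi_zero hlam0 hlam1).const_mul M).mono'
      hf.aestronglyMeasurable.restrict ?_
    filter_upwards [ae_restrict_mem measurableSet_Ioi] with t ht using hfM t (le_of_lt ht)
  refine ((hf.integrableOn_Icc (a := a) (b := 0)).union h0).mono_set fun t ht => ?_
  rcases le_or_gt t 0 with h | h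
  · exact Or.inl ⟨le_of_lt ht, h⟩
  · exact Or.inr h

variable [NormedSpace ℝ G]

lemma norm_integral_Ioi_le_of_norm_le_rpow {f : ℝ → G} {M lam : ℝ}
    (hlam0 : 0 < lam) (hlam1 : lam < 1) (hfM : ∀ t, 0 ≤ t → ‖f t‖ ≤ M * lam ^ t) :
    ‖∫ t in Ioi (0 : ℝ), f t‖ ≤ M * -(Real.log lam)⁻¹ := by
  rw [← integral_const_rpow_Ioi_zero hlam0 hlam1, ← integral_const_mul]
  refine norm_integral_le_of_norm_le ((integrableOn_const_rpow_Ioi_zero hlam0 hlam1).const_mul M) ?_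
  filter_upwards [ae_restrict_mem measurableSet_Ioi] with t ht using hfM t (le_of_lt ht)

lemma exists_norm_integral_sub_integral_sub_smul_le {X : Type*} {K : Set X} {f g : X → ℝ → G}
    {c : X → ℝ} {μ : X → G} {lam Ms Mu : ℝ} (hlam0 : 0 < lam)
    (hlam1 : lam < 1) (hf : ∀ x ∈ K, ∀ t, 0 ≤ t → ‖f x t‖ ≤ Ms * lam ^ t)
    (hg : ∀ x ∈ K, ∀ t, 0 ≤ t → ‖g x t‖ ≤ Mu * lam ^ t) (hcb : ∃ M, ∀ x ∈ K, ‖c x‖ ≤ M)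
    (hμb : ∃ M, ∀ x ∈ K, ‖μ x‖ ≤ M) :
    ∃ M, ∀ x ∈ K, ‖(∫ t in Ioi 0, f x t) - (∫ t in Ioi 0, g x t) - c x • μ x‖ ≤ M := by
  obtain ⟨Mc, hMc⟩ := hcb
  obtain ⟨Mμ, hMμ⟩ := hμb
  refine ⟨Ms * -(Real.log lam)⁻¹ + Mu * -(Real.log lam)⁻¹ + Mc * Mμ, fun x hx => ?_⟩
  refine (norm_sub_le _ _).trans (add_le_add ((norm_sub_le _ _).trans (add_le_add ?_ ?_)) ?_)
  · exact norm_integral_Ioi_le_of_norm_le_rpow hlam0 hlam1 (hf x hx)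
  · exact norm_integral_Ioi_le_of_norm_le_rpow hlam0 hlam1 (hg x hx)
  · exact (norm_smul_le _ _).trans
      (mul_le_mul (hMc x hx) (hMμ x hx) (norm_nonneg _) ((norm_nonneg _).trans (hMc x hx)))

lemma setIntegral_Ioi_comp_add_right (g : ℝ → G) (s : ℝ) :
    ∫ t in Ioi 0, g (t + s) = ∫ u in Ioi s, g u := by
  have h := (measurePreserving_add_right volume s).setIntegral_preimage_emb
    (measurableEmbedding_addRight s) g (Ioi s)
  rwa [preimage_add_const_Ioi, sub_self] at h

variable [CompleteSpace G]

lemma ContinuousLinearMap.integral_comp_right {X E' F' : Type*} [MeasurableSpace X]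
    {μ : Measure X} [NormedAddCommGroup E'] [NormedSpace ℝ E'] [NormedAddCommGroup F']
    [NormedSpace ℝ F'] {f : X → F' →L[ℝ] G} (hf : Integrable f μ) (A : E' →L[ℝ] F') :
    (∫ x, f x ∂μ).comp A = ∫ x, (f x).comp A ∂μ :=
  (((ContinuousLinearMap.compL ℝ E' F' G).flip A).integral_comp_comm hf).symm

lemma hasDerivAt_integral_Ioi_comp_add {g : ℝ → G} (hg : Continuous g)
    (hint : ∀ a, IntegrableOn g (Ioi a)) (s : ℝ) :
    HasDerivAt (fun r => ∫ t in Ioi 0, g (t + r)) (-g s) s := by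
  have htail : (fun r => ∫ t in Ioi 0, g (t + r)) =
      fun r => (∫ u in Ioi 0, g u) - ∫ u in (0 : ℝ)..r, g u := by
    funext r
    rw [setIntegral_Ioi_comp_add_right, ← intervalIntegral.integral_Ioi_sub_Ioi' (hint 0) (hint r),
      sub_sub_cancel]
  rw [htail, ← zero_sub]
  exact (hasDerivAt_const s _).sub (hg.integral_hasStrictDerivAt 0 s).hasDerivAt

lemma hasDerivAt_integral_Ioi_comp_neg_add {g : ℝ → G} (hg : Continuous g)
    (hint : ∀ a, IntegrableOn (fun t => g (-t)) (Ioi a)) (s : ℝ) :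
    HasDerivAt (fun r => ∫ t in Ioi 0, g (-t + r)) (g s) s := by
  have h := (hasDerivAt_integral_Ioi_comp_add (hg.comp continuous_neg) hint (-s)).scomp s
    (hasDerivAt_neg s)
  simp only [comp_def, neg_add, neg_neg, neg_smul, one_smul] at h
  exact h

end HalfLine

lemma hasDerivAt_of_mul_eq_one {R : Type*} [NormedRing R] [NormedAlgebra ℝ R] [CompleteSpace R]
    {A B : ℝ → R} {A' : R} {s : ℝ} (hA : HasDerivAt A A' s) (hAB : ∀ r, A r * B r = 1)
    (hBA : ∀ r, B r * A r = 1) : HasDerivAt B (-(B s * A' * B s)) s := by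
  let u : ℝ → Rˣ := fun r => ⟨A r, B r, hAB r, hBA r⟩
  have hB : Ring.inverse ∘ A = B := funext fun r => Ring.inverse_unit (u r)
  have h := (hasFDerivAt_ringInverse (u s)).comp_hasDerivAt s hA
  rw [hB] at h
  simpa [u] using h

section Flow

variable {E : Type*} [NormedAddCommGroup E] [NormedSpace ℝ E]

structure IsC1Flow (F : E → E) (φ : ℝ → E → E) : Prop where
  map_zero : ∀ x, φ 0 x = x
  map_add : ∀ s t x, φ (s + t) x = φ s (φ t x)
  hasDerivAt : ∀ x t, HasDerivAt (fun s => φ s x) (F (φ t x)) t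
  differentiable : ∀ t, Differentiable ℝ (φ t)
  continuous_fderiv : Continuous fun p : ℝ × E => fderiv ℝ (φ p.1) p.2

namespace IsC1Flow

variable {F : E → E} {φ : ℝ → E → E}

lemma continuous_orbit (hφ : IsC1Flow F φ) (x : E) : Continuous fun t => φ t x :=
  continuous_iff_continuousAt.2 fun t => (hφ.hasDerivAt x t).continuousAt

lemma continuous_fderiv_orbit (hφ : IsC1Flow F φ) (x : E) :
    Continuous fun t => fderiv ℝ (φ t) x :=
  hφ.continuous_fderiv.comp (continuous_id.prodMk continuous_const)

lemma fderiv_add (hφ : IsC1Flow F φ) (s t : ℝ) (x : E) :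
    fderiv ℝ (φ (s + t)) x = (fderiv ℝ (φ s) (φ t x)).comp (fderiv ℝ (φ t) x) := by
  rw [show φ (s + t) = φ s ∘ φ t from funext (hφ.map_add s t)]
  exact fderiv_comp x (hφ.differentiable s _) (hφ.differentiable t x)

lemma fderiv_zero (hφ : IsC1Flow F φ) (x : E) : fderiv ℝ (φ 0) x = ContinuousLinearMap.id ℝ E := by
  rw [show φ 0 = id from funext hφ.map_zero, fderiv_id]

lemma fderiv_neg_comp_fderiv (hφ : IsC1Flow F φ) (s : ℝ) (x : E) :
    (fderiv ℝ (φ (-s)) (φ s x)).comp (fderiv ℝ (φ s) x) = ContinuousLinearMap.id ℝ E := by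
  rw [← hφ.fderiv_add, neg_add_cancel, hφ.fderiv_zero]

lemma fderiv_comp_fderiv_neg (hφ : IsC1Flow F φ) (s : ℝ) (x : E) :
    (fderiv ℝ (φ s) x).comp (fderiv ℝ (φ (-s)) (φ s x)) = ContinuousLinearMap.id ℝ E := by
  have h := hφ.fderiv_add s (-s) (φ s x)
  rw [← hφ.map_add, neg_add_cancel, hφ.map_zero, add_neg_cancel, hφ.fderiv_zero] at h
  exact h.symm

lemma fderiv_apply_fderiv_neg (hφ : IsC1Flow F φ) (s : ℝ) (x v : E) :
    fderiv ℝ (φ s) x (fderiv ℝ (φ (-s)) (φ s x) v) = v := by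
  simpa using congrArg (· v) (hφ.fderiv_comp_fderiv_neg s x)

lemma fderiv_apply_vectorField (hφ : IsC1Flow F φ) (t : ℝ) (x : E) :
    fderiv ℝ (φ t) x (F x) = F (φ t x) := by
  have hcomp : HasDerivAt (fun s => φ t (φ s x)) (fderiv ℝ (φ t) x (F x)) 0 := by
    simpa only [hφ.map_zero, comp_def] using
      (hφ.differentiable t (φ 0 x)).hasFDerivAt.comp_hasDerivAt 0 (hφ.hasDerivAt x 0)
  have hshift : HasDerivAt (fun s => φ t (φ s x)) (F (φ t x)) 0 := by
    simp_rw [← hφ.map_add]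
    simpa using (hφ.hasDerivAt x (t + 0)).comp_const_add t 0
  exact hcomp.unique hshift

lemma eq_add_integral [CompleteSpace E] (hφ : IsC1Flow F φ) (hF : Continuous F) (r : ℝ) (x : E) :
    φ r x = x + ∫ u in (0 : ℝ)..r, F (φ u x) := by
  rw [intervalIntegral.integral_eq_sub_of_hasDerivAt (fun u _ => hφ.hasDerivAt x u)
    ((hF.comp (hφ.continuous_orbit x)).intervalIntegrable 0 r), hφ.map_zero, add_sub_cancel]

variable [FiniteDimensional ℝ E]

lemma continuous_uncurry (hφ : IsC1Flow F φ) :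
    Continuous fun p : ℝ × E => φ p.1 p.2 := by
  refine continuous_iff_continuousAt.2 fun ⟨t₀, x₀⟩ => ?_
  set T := Icc (t₀ - 1) (t₀ + 1)
  set B := Metric.closedBall x₀ 1
  obtain ⟨L, hL⟩ := ((isCompact_Icc.prod (isCompact_closedBall x₀ 1)).image_of_continuousOn
    hφ.continuous_fderiv.nnnorm.continuousOn).bddAbove
  have hlip : ∀ t ∈ T, LipschitzOnWith L (φ t) B := fun t ht =>
    (convex_closedBall x₀ 1).lipschitzOnWith_of_nnnorm_fderiv_le
      (fun x _ => hφ.differentiable t x) fun x hx => hL ⟨(t, x), ⟨ht, hx⟩, rfl⟩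
  have hcont : ContinuousOn (fun p : ℝ × E => φ p.1 p.2) (T ×ˢ B) :=
    continuousOn_prod_of_continuousOn_lipschitzOnWith' _ L hlip
      fun x _ => (hφ.continuous_orbit x).continuousOn
  exact hcont.continuousAt (prod_mem_nhds (Icc_mem_nhds (by linarith) (by linarith))
    (Metric.closedBall_mem_nhds x₀ one_pos))

lemma fderiv_eq_id_add_integral (hφ : IsC1Flow F φ) (hF : ContDiff ℝ 1 F) (r : ℝ) (x : E) :
    fderiv ℝ (φ r) x = ContinuousLinearMap.id ℝ E +
      ∫ u in (0 : ℝ)..r, (fderiv ℝ F (φ u x)).comp (fderiv ℝ (φ u) x) := by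
  have hDF : Continuous (fderiv ℝ F) := hF.continuous_fderiv one_ne_zero
  obtain ⟨L, hL⟩ := (isCompact_uIcc.prod (isCompact_closedBall x 1)).exists_bound_of_continuousOn
    ((hDF.comp hφ.continuous_uncurry).clm_comp hφ.continuous_fderiv).continuousOn
  have hint : HasFDerivAt (fun z => ∫ u in (0 : ℝ)..r, F (φ u z))
      (∫ u in (0 : ℝ)..r, (fderiv ℝ F (φ u x)).comp (fderiv ℝ (φ u) x)) x := by
    refine intervalIntegral.hasFDerivAt_integral_of_dominated_of_fderiv_le
      (F' := fun z u => (fderiv ℝ F (φ u z)).comp (fderiv ℝ (φ u) z)) (bound := fun _ => L)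
      (Metric.ball_mem_nhds x one_pos) ?_ ?_ ?_ ?_ intervalIntegrable_const ?_
    · exact Eventually.of_forall fun z =>
        (hF.continuous.comp (hφ.continuous_orbit z)).aestronglyMeasurable
    · exact (hF.continuous.comp (hφ.continuous_orbit x)).intervalIntegrable 0 r
    · exact ((hDF.comp (hφ.continuous_orbit x)).clm_comp
        (hφ.continuous_fderiv_orbit x)).aestronglyMeasurable
    · exact Eventually.of_forall fun u hu z hz =>
        hL (u, z) ⟨uIoc_subset_uIcc hu, Metric.ball_subset_closedBall hz⟩
    · exact Eventually.of_forall fun u _ z _ =>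
        (hF.differentiable one_ne_zero (φ u z)).hasFDerivAt.comp z
          (hφ.differentiable u z).hasFDerivAt
  rw [show φ r = fun z => z + ∫ u in (0 : ℝ)..r, F (φ u z) from
    funext (hφ.eq_add_integral hF.continuous r)]
  exact ((hasFDerivAt_id x).add hint).fderiv

lemma hasDerivAt_fderiv (hφ : IsC1Flow F φ) (hF : ContDiff ℝ 1 F) (x : E) (s : ℝ) :
    HasDerivAt (fun r => fderiv ℝ (φ r) x) ((fderiv ℝ F (φ s x)).comp (fderiv ℝ (φ s) x)) s := by
  rw [show (fun r => fderiv ℝ (φ r) x) = _ from funext (hφ.fderiv_eq_id_add_integral hF · x)]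
  exact (((hF.continuous_fderiv one_ne_zero).comp (hφ.continuous_orbit x)).clm_comp
    (hφ.continuous_fderiv_orbit x)).integral_hasStrictDerivAt 0 s |>.hasDerivAt.const_add _

lemma hasDerivAt_fderiv_neg (hφ : IsC1Flow F φ) (hF : ContDiff ℝ 1 F) (x : E) (s : ℝ) :
    HasDerivAt (fun r => fderiv ℝ (φ (-r)) (φ r x))
      (-(fderiv ℝ (φ (-s)) (φ s x)).comp (fderiv ℝ F (φ s x))) s := by
  refine (hasDerivAt_of_mul_eq_one (hφ.hasDerivAt_fderiv hF x s)
    (hφ.fderiv_comp_fderiv_neg · x) (hφ.fderiv_neg_comp_fderiv · x)).congr_deriv ?_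
  rw [ContinuousLinearMap.mul_def, ContinuousLinearMap.mul_def, ContinuousLinearMap.comp_assoc,
    ContinuousLinearMap.comp_assoc, hφ.fderiv_comp_fderiv_neg, ContinuousLinearMap.comp_id]

end IsC1Flow

end Flow

section Splitting

variable {E : Type*} [NormedAddCommGroup E] [NormedSpace ℝ E]

lemma ContinuousLinearMap.norm_eq_of_apply_eq_smul {ε : E →L[ℝ] ℝ} {P : E →L[ℝ] E} {w : E}
    (hw : w ≠ 0) (hP : ∀ v, P v = ε v • w) : ‖ε‖ = ‖P‖ * ‖w‖⁻¹ := by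
  rw [show P = ε.smulRight w from ContinuousLinearMap.ext hP,
    ContinuousLinearMap.norm_smulRight_apply, mul_inv_cancel_right₀ (norm_ne_zero_iff.2 hw)]

structure IsSplitting (Vs Vu Vc : Submodule ℝ E) (Ps Pu Pc : E →L[ℝ] E) : Prop where
  decomp : ∀ v, Ps v ∈ Vs ∧ Pu v ∈ Vu ∧ Pc v ∈ Vc ∧ Ps v + Pu v + Pc v = v
  direct : ∀ vs ∈ Vs, ∀ vu ∈ Vu, ∀ vc ∈ Vc, vs + vu + vc = 0 → vs = 0 ∧ vu = 0 ∧ vc = 0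

namespace IsSplitting

variable {Vs Vu Vc : Submodule ℝ E} {Ps Pu Pc : E →L[ℝ] E}

lemma eq_of_add_eq (h : IsSplitting Vs Vu Vc Ps Pu Pc) {v a b c : E} (ha : a ∈ Vs) (hb : b ∈ Vu)
    (hc : c ∈ Vc) (habc : a + b + c = v) : Ps v = a ∧ Pu v = b ∧ Pc v = c := by
  obtain ⟨hs, hu, hc', hsum⟩ := h.decomp v
  have h0 : (Ps v - a) + (Pu v - b) + (Pc v - c) = 0 := by
    rw [← sub_eq_zero.2 (hsum.trans habc.symm)]; abel
  obtain ⟨e1, e2, e3⟩ := h.direct _ (sub_mem hs ha) _ (sub_mem hu hb) _ (sub_mem hc' hc) h0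
  exact ⟨sub_eq_zero.1 e1, sub_eq_zero.1 e2, sub_eq_zero.1 e3⟩

lemma apply_of_mem_center (h : IsSplitting Vs Vu Vc Ps Pu Pc) {w : E} (hw : w ∈ Vc) :
    Ps w = 0 ∧ Pu w = 0 ∧ Pc w = w :=
  h.eq_of_add_eq Vs.zero_mem Vu.zero_mem hw (by rw [zero_add, zero_add])

lemma map_apply {Vs' Vu' Vc' : Submodule ℝ E} {Ps' Pu' Pc' : E →L[ℝ] E}
    (h : IsSplitting Vs Vu Vc Ps Pu Pc) (h' : IsSplitting Vs' Vu' Vc' Ps' Pu' Pc') {A : E →L[ℝ] E}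
    (hs : Vs.map (A : E →ₗ[ℝ] E) ≤ Vs') (hu : Vu.map (A : E →ₗ[ℝ] E) ≤ Vu')
    (hc : Vc.map (A : E →ₗ[ℝ] E) ≤ Vc') (v : E) :
    Ps' (A v) = A (Ps v) ∧ Pu' (A v) = A (Pu v) ∧ Pc' (A v) = A (Pc v) := by
  obtain ⟨hvs, hvu, hvc, hsum⟩ := h.decomp v
  exact h'.eq_of_add_eq (hs (Submodule.mem_map_of_mem hvs)) (hu (Submodule.mem_map_of_mem hvu))
    (hc (Submodule.mem_map_of_mem hvc)) (by rw [← map_add, ← map_add, hsum])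

lemma apply_center_eq_smul (h : IsSplitting Vs Vu Vc Ps Pu Pc) {w : E} (hVc : Vc = ℝ ∙ w)
    {ε : E →L[ℝ] ℝ} (hεs : ∀ v ∈ Vs, ε v = 0) (hεu : ∀ v ∈ Vu, ε v = 0) (hεw : ε w = 1) (v : E) :
    Pc v = ε v • w := by
  obtain ⟨hvs, hvu, hvc, hsum⟩ := h.decomp v
  obtain ⟨a, ha⟩ := Submodule.mem_span_singleton.1 (hVc ▸ hvc)
  have hεv : ε v = a := by
    rw [← hsum, map_add, map_add, hεs _ hvs, hεu _ hvu, ← ha, map_smul, hεw, smul_eq_mul, mul_one,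
      zero_add, zero_add]
  rw [hεv, ha]

lemma covector_comp_eq {Vs' Vu' : Submodule ℝ E} (h : IsSplitting Vs Vu Vc Ps Pu Pc)
    {A : E →L[ℝ] E} (hs : Vs.map (A : E →ₗ[ℝ] E) ≤ Vs') (hu : Vu.map (A : E →ₗ[ℝ] E) ≤ Vu')
    {w : E} {ε ε' : E →L[ℝ] ℝ} (hPc : ∀ v, Pc v = ε v • w) (hε's : ∀ v ∈ Vs', ε' v = 0)
    (hε'u : ∀ v ∈ Vu', ε' v = 0) (hAw : ε' (A w) = 1) : ε'.comp A = ε := by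
  ext v
  obtain ⟨hvs, hvu, -, hsum⟩ := h.decomp v
  have hAs : A (Ps v) ∈ Vs' := hs (Submodule.mem_map_of_mem hvs)
  have hAu : A (Pu v) ∈ Vu' := hu (Submodule.mem_map_of_mem hvu)
  calc ε' (A v) = ε' (A (Ps v)) + ε' (A (Pu v)) + ε' (A (Pc v)) := by
        rw [← map_add, ← map_add, ← map_add, ← map_add, hsum]
    _ = ε v := by rw [hε's _ hAs, hε'u _ hAu, hPc, map_smul, map_smul, hAw, smul_eq_mul, mul_one,
        zero_add, zero_add]

end IsSplitting

end Splitting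

section Pullback

variable {E : Type*} [NormedAddCommGroup E] [NormedSpace ℝ E]

noncomputable def projectedPullback (ω : E → E →L[ℝ] ℝ) (P : E → E →L[ℝ] E) (φ : ℝ → E → E)
    (x : E) (t : ℝ) : E →L[ℝ] ℝ :=
  ((ω (φ t x)).comp (P (φ t x))).comp (fderiv ℝ (φ t) x)

variable {F : E → E} {φ : ℝ → E → E} {ω : E → E →L[ℝ] ℝ} {P : E → E →L[ℝ] E}

lemma continuous_projectedPullback (hφ : IsC1Flow F φ) {K : Set E} (hω : ContinuousOn ω K)
    (hP : ContinuousOn P K) {x : E} (hx : ∀ t, φ t x ∈ K) :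
    Continuous (projectedPullback ω P φ x) :=
  ((hω.comp_continuous (hφ.continuous_orbit x) hx).clm_comp
    (hP.comp_continuous (hφ.continuous_orbit x) hx)).clm_comp (hφ.continuous_fderiv_orbit x)

lemma projectedPullback_comp_fderiv (hφ : IsC1Flow F φ) (x : E) (s t : ℝ) :
    (projectedPullback ω P φ (φ s x) t).comp (fderiv ℝ (φ s) x) =
      projectedPullback ω P φ x (t + s) := by
  rw [projectedPullback, projectedPullback, ContinuousLinearMap.comp_assoc, ← hφ.fderiv_add,
    ← hφ.map_add]

lemma norm_projectedPullback_le {x : E} {t a b c : ℝ} {V : Submodule ℝ E}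
    (hcomm : ∀ v, P (φ t x) (fderiv ℝ (φ t) x v) = fderiv ℝ (φ t) x (P x v))
    (hPV : ∀ v, P x v ∈ V) (hV : ∀ v ∈ V, ‖fderiv ℝ (φ t) x v‖ ≤ c * ‖v‖)
    (hω : ‖ω (φ t x)‖ ≤ a) (hP : ‖P x‖ ≤ b) (hc : 0 ≤ c) :
    ‖projectedPullback ω P φ x t‖ ≤ a * (c * b) := by
  have hPA : (P (φ t x)).comp (fderiv ℝ (φ t) x) = (fderiv ℝ (φ t) x).comp (P x) :=
    ContinuousLinearMap.ext hcomm
  have hAP : ‖(fderiv ℝ (φ t) x).comp (P x)‖ ≤ c * b := by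
    refine ContinuousLinearMap.opNorm_le_bound _ (mul_nonneg hc ((norm_nonneg _).trans hP))
      fun v => ?_
    calc ‖fderiv ℝ (φ t) x (P x v)‖ ≤ c * ‖P x v‖ := hV _ (hPV v)
      _ ≤ c * (b * ‖v‖) := by gcongr; exact (P x).le_of_opNorm_le hP v
      _ = c * b * ‖v‖ := (mul_assoc _ _ _).symm
  rw [projectedPullback, ContinuousLinearMap.comp_assoc, hPA]
  exact (ContinuousLinearMap.opNorm_comp_le _ _).trans
    (mul_le_mul hω hAP (norm_nonneg _) ((norm_nonneg _).trans hω))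

lemma projectedPullback_apply_vectorField (hφ : IsC1Flow F φ) {x : E} {t : ℝ}
    (hPF : P (φ t x) (F (φ t x)) = 0) : projectedPullback ω P φ x t (F x) = 0 := by
  rw [projectedPullback, ContinuousLinearMap.comp_apply, ContinuousLinearMap.comp_apply,
    hφ.fderiv_apply_vectorField, hPF, map_zero]

lemma projectedPullback_add_add {Ps Pu Pc : E → E →L[ℝ] E} {ε : E →L[ℝ] ℝ} {x : E} {t : ℝ}
    (hsum : ∀ w, Ps (φ t x) w + Pu (φ t x) w + Pc (φ t x) w = w)
    (hPc : ∀ v, Pc (φ t x) (fderiv ℝ (φ t) x v) = ε v • F (φ t x)) :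
    projectedPullback ω Ps φ x t + projectedPullback ω Pu φ x t + ω (φ t x) (F (φ t x)) • ε =
      (ω (φ t x)).comp (fderiv ℝ (φ t) x) := by
  ext v
  have h := congrArg (ω (φ t x)) (hsum (fderiv ℝ (φ t) x v))
  rw [map_add, map_add, hPc, map_smul, smul_eq_mul] at h
  simpa [projectedPullback, mul_comm] using h

end Pullback

section AdjointShadowing

variable {E : Type*} [NormedAddCommGroup E] [NormedSpace ℝ E] {F : E → E} {φ : ℝ → E → E}
  {K : Set E} {ω εc ν : E → E →L[ℝ] ℝ} {ψ : E → ℝ} {Ps Pu Pc : E → E →L[ℝ] E}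

lemma exists_norm_projectedPullback_le_rpow {P : E → E →L[ℝ] E} {V : E → Submodule ℝ E}
    {τ : ℝ → ℝ} {C lam : ℝ} (hKc : IsCompact K) (hωc : ContinuousOn ω K)
    (hK : ∀ t, ∀ x ∈ K, φ t x ∈ K) (hPb : ∃ M, ∀ x ∈ K, ‖P x‖ ≤ M)
    (hPV : ∀ x ∈ K, ∀ v, P x v ∈ V x)
    (hcomm : ∀ t, ∀ x ∈ K, ∀ v, P (φ t x) (fderiv ℝ (φ t) x v) = fderiv ℝ (φ t) x (P x v))
    (hV : ∀ t, 0 ≤ t → ∀ x ∈ K, ∀ v ∈ V x, ‖fderiv ℝ (φ (τ t)) x v‖ ≤ C * lam ^ t * ‖v‖)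
    (hC : 0 ≤ C) (hlam0 : 0 < lam) :
    ∃ M, ∀ x ∈ K, ∀ t, 0 ≤ t → ‖projectedPullback ω P φ x (τ t)‖ ≤ M * lam ^ t := by
  obtain ⟨Mω, hMω⟩ := hKc.exists_bound_of_continuousOn hωc
  obtain ⟨MP, hMP⟩ := hPb
  refine ⟨Mω * C * MP, fun x hx t ht => ?_⟩
  refine (norm_projectedPullback_le (hcomm (τ t) x hx) (hPV x hx) (hV t ht x hx)
    (hMω _ (hK (τ t) x hx)) (hMP x hx) ?_).trans_eq (by ring)
  exact mul_nonneg hC (Real.rpow_nonneg hlam0.le t)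

lemma exists_norm_covector_le (hKc : IsCompact K) (hF : Continuous F) (hFne : ∀ x ∈ K, F x ≠ 0)
    (hPc : ∀ x ∈ K, ∀ v, Pc x v = εc x v • F x) (hPcb : ∃ M, ∀ x ∈ K, ‖Pc x‖ ≤ M) :
    ∃ M, ∀ x ∈ K, ‖εc x‖ ≤ M := by
  obtain ⟨MP, hMP⟩ := hPcb
  obtain ⟨Minv, hMinv⟩ := (hKc.image_of_continuousOn
    (hF.norm.continuousOn.inv₀ fun x hx => norm_ne_zero_iff.2 (hFne x hx))).bddAbove
  refine ⟨MP * Minv, fun x hx => ?_⟩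
  rw [ContinuousLinearMap.norm_eq_of_apply_eq_smul (hFne x hx) (hPc x hx)]
  exact mul_le_mul (hMP x hx) (hMinv (mem_image_of_mem _ hx)) (by positivity)
    ((norm_nonneg _).trans (hMP x hx))

lemma apply_vectorField_eq_neg (hφ : IsC1Flow F φ) {y : E}
    (hν : ν y = (∫ t in Ioi 0, projectedPullback ω Ps φ y t) -
      (∫ t in Ioi 0, projectedPullback ω Pu φ y (-t)) - ψ y • εc y)
    (hIs : IntegrableOn (projectedPullback ω Ps φ y) (Ioi 0))
    (hIu : IntegrableOn (fun t => projectedPullback ω Pu φ y (-t)) (Ioi 0))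
    (hPsF : ∀ t, Ps (φ t y) (F (φ t y)) = 0) (hPuF : ∀ t, Pu (φ t y) (F (φ t y)) = 0)
    (hεF : εc y (F y) = 1) : ν y (F y) = -ψ y := by
  rw [hν, sub_apply, sub_apply, ContinuousLinearMap.integral_apply hIs,
    ContinuousLinearMap.integral_apply hIu, smul_apply, hεF]
  simp only [projectedPullback_apply_vectorField hφ (hPsF _),
    projectedPullback_apply_vectorField hφ (hPuF _), integral_zero, smul_eq_mul, mul_one,
    sub_zero, zero_sub]

variable [FiniteDimensional ℝ E]

lemma IsC1Flow.hasDerivAt_orbit_of_hasDerivAt_comp_fderiv (hφ : IsC1Flow F φ)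
    (hF : ContDiff ℝ 1 F) {x : E} {t : ℝ}
    (hμ : HasDerivAt (fun r => (ν (φ r x)).comp (fderiv ℝ (φ r) x))
      (-(ω (φ t x)).comp (fderiv ℝ (φ t) x)) t) :
    HasDerivAt (fun s => ν (φ s x)) (-(ν (φ t x)).comp (fderiv ℝ F (φ t x)) - ω (φ t x)) t := by
  have hν : (fun s => ν (φ s x)) =
      fun r => ((ν (φ r x)).comp (fderiv ℝ (φ r) x)).comp (fderiv ℝ (φ (-r)) (φ r x)) := by
    funext r
    rw [ContinuousLinearMap.comp_assoc, hφ.fderiv_comp_fderiv_neg, ContinuousLinearMap.comp_id]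
  rw [hν]
  refine (hμ.clm_comp (hφ.hasDerivAt_fderiv_neg hF x t)).congr_deriv ?_
  ext v
  simp only [add_apply, neg_apply, sub_apply, ContinuousLinearMap.comp_apply, map_neg,
    hφ.fderiv_apply_fderiv_neg]
  abel

lemma hasDerivAt_orbit_of_eq_integral_sub_integral (hφ : IsC1Flow F φ) (hF : ContDiff ℝ 1 F)
    (hK : ∀ t, ∀ x ∈ K, φ t x ∈ K) {x₀ : E} (hx₀ : x₀ ∈ K) (hωc : ContinuousOn ω K)
    (hPsc : ContinuousOn Ps K) (hPuc : ContinuousOn Pu K)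
    (hν : ∀ x ∈ K, ν x = (∫ t in Ioi 0, projectedPullback ω Ps φ x t) -
      (∫ t in Ioi 0, projectedPullback ω Pu φ x (-t)) - ψ x • εc x)
    (hIs : ∀ x ∈ K, ∀ a, IntegrableOn (projectedPullback ω Ps φ x) (Ioi a))
    (hIu : ∀ x ∈ K, ∀ a, IntegrableOn (fun t => projectedPullback ω Pu φ x (-t)) (Ioi a))
    (hψ : ∀ t, HasDerivAt (fun s => ψ (φ s x₀)) (ω (φ t x₀) (F (φ t x₀))) t)
    (hεc : ∀ t, (εc (φ t x₀)).comp (fderiv ℝ (φ t) x₀) = εc x₀)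
    (hsum : ∀ t w, Ps (φ t x₀) w + Pu (φ t x₀) w + Pc (φ t x₀) w = w)
    (hPc : ∀ t v, Pc (φ t x₀) v = εc (φ t x₀) v • F (φ t x₀)) (t : ℝ) :
    HasDerivAt (fun s => ν (φ s x₀))
      (-(ν (φ t x₀)).comp (fderiv ℝ F (φ t x₀)) - ω (φ t x₀)) t := by
  refine hφ.hasDerivAt_orbit_of_hasDerivAt_comp_fderiv hF ?_
  have hpull : (fun r => (ν (φ r x₀)).comp (fderiv ℝ (φ r) x₀)) = fun r =>
      (∫ s in Ioi 0, projectedPullback ω Ps φ x₀ (s + r)) -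
      (∫ s in Ioi 0, projectedPullback ω Pu φ x₀ (-s + r)) - ψ (φ r x₀) • εc x₀ := by
    funext r
    rw [hν _ (hK r x₀ hx₀), ContinuousLinearMap.sub_comp, ContinuousLinearMap.sub_comp,
      ContinuousLinearMap.smul_comp, hεc r,
      ContinuousLinearMap.integral_comp_right (hIs _ (hK r x₀ hx₀) 0),
      ContinuousLinearMap.integral_comp_right (hIu _ (hK r x₀ hx₀) 0)]
    simp only [projectedPullback_comp_fderiv hφ]
  rw [hpull]
  have hs := hasDerivAt_integral_Ioi_comp_add
    (continuous_projectedPullback hφ hωc hPsc (hK · x₀ hx₀)) (hIs x₀ hx₀) t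
  have hu := hasDerivAt_integral_Ioi_comp_neg_add
    (continuous_projectedPullback hφ hωc hPuc (hK · x₀ hx₀)) (hIu x₀ hx₀) t
  refine ((hs.sub hu).sub ((hψ t).smul_const (εc x₀))).congr_deriv ?_
  rw [← projectedPullback_add_add (hsum t) fun v => by
    rw [hPc, ← ContinuousLinearMap.comp_apply, hεc t]]
  abel

end AdjointShadowing

theorem adjoint_shadowing_expansion_flow_general
    {E : Type*} [NormedAddCommGroup E] [NormedSpace ℝ E] [FiniteDimensional ℝ E]
    (F : E → E) (hF : ContDiff ℝ 2 F)
    (φ : ℝ → E → E)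
    (hφ0 : ∀ x : E, φ 0 x = x)
    (hφadd : ∀ (s t : ℝ) (x : E), φ (s + t) x = φ s (φ t x))
    (hφode : ∀ (x : E) (t : ℝ), HasDerivAt (fun s => φ s x) (F (φ t x)) t)
    (hφC1 : ∀ t : ℝ, ContDiff ℝ 1 (φ t))
    (hφD : Continuous fun p : ℝ × E => fderiv ℝ (φ p.1) p.2)
    (K : Set E) (hKc : IsCompact K) (hφK : ∀ t : ℝ, φ t '' K = K)
    (hFne : ∀ x ∈ K, F x ≠ 0)
    (Vs Vu Vc : E → Submodule ℝ E)
    (hVc : ∀ x ∈ K, Vc x = Submodule.span ℝ {F x})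
    (hequivs : ∀ (t : ℝ), ∀ x ∈ K, (Vs x).map (fderiv ℝ (φ t) x : E →ₗ[ℝ] E) = Vs (φ t x))
    (hequivu : ∀ (t : ℝ), ∀ x ∈ K, (Vu x).map (fderiv ℝ (φ t) x : E →ₗ[ℝ] E) = Vu (φ t x))
    (hequivc : ∀ (t : ℝ), ∀ x ∈ K, (Vc x).map (fderiv ℝ (φ t) x : E →ₗ[ℝ] E) = Vc (φ t x))
    (C lam : ℝ) (hC : 0 < C) (hlam0 : 0 < lam) (hlam1 : lam < 1)
    (hyps : ∀ t : ℝ, 0 ≤ t → ∀ x ∈ K, ∀ v ∈ Vs x, ‖fderiv ℝ (φ t) x v‖ ≤ C * lam ^ t * ‖v‖)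
    (hypu : ∀ t : ℝ, 0 ≤ t → ∀ x ∈ K, ∀ v ∈ Vu x, ‖fderiv ℝ (φ (-t)) x v‖ ≤ C * lam ^ t * ‖v‖)
    (Ps Pu Pc : E → E →L[ℝ] E)
    (hproj : ∀ x ∈ K, ∀ v : E, Ps x v ∈ Vs x ∧ Pu x v ∈ Vu x ∧ Pc x v ∈ Vc x ∧
      Ps x v + Pu x v + Pc x v = v)
    (hdirect : ∀ x ∈ K, ∀ vs ∈ Vs x, ∀ vu ∈ Vu x, ∀ vc ∈ Vc x,
      vs + vu + vc = 0 → vs = 0 ∧ vu = 0 ∧ vc = 0)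
    (hPbdd : ∃ M : ℝ, ∀ x ∈ K, ‖Ps x‖ + ‖Pu x‖ + ‖Pc x‖ ≤ M)
    (εc : E → E →L[ℝ] ℝ)
    (hεc : ∀ x ∈ K, (∀ v ∈ Vs x, εc x v = 0) ∧ (∀ v ∈ Vu x, εc x v = 0) ∧ εc x (F x) = 1)
    (hPsc : ContinuousOn Ps K) (hPuc : ContinuousOn Pu K)
    (ω : E → E →L[ℝ] ℝ) (hωc : ContinuousOn ω K)
    (ψ : E → ℝ) (hψc : ContinuousOn ψ K)
    (hψ : ∀ x₀ ∈ K, ∀ t : ℝ,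
      HasDerivAt (fun s => ψ (φ s x₀)) (ω (φ t x₀) (F (φ t x₀))) t)
    (ν : E → E →L[ℝ] ℝ)
    (hν : ∀ x ∈ K, ν x =
      (∫ t in Ioi (0:ℝ), ((ω (φ t x)).comp (Ps (φ t x))).comp (fderiv ℝ (φ t) x)) -
      (∫ t in Ioi (0:ℝ), ((ω (φ (-t) x)).comp (Pu (φ (-t) x))).comp (fderiv ℝ (φ (-t)) x)) -
      ψ x • εc x) :
    (∀ x ∈ K,
      IntegrableOn (fun t : ℝ => ((ω (φ t x)).comp (Ps (φ t x))).comp (fderiv ℝ (φ t) x))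
        (Ioi (0:ℝ)) ∧
      IntegrableOn (fun t : ℝ => ((ω (φ (-t) x)).comp (Pu (φ (-t) x))).comp (fderiv ℝ (φ (-t)) x))
        (Ioi (0:ℝ))) ∧
    (∃ M : ℝ, ∀ x ∈ K, ‖ν x‖ ≤ M) ∧
    (∀ x₀ ∈ K, ∀ t : ℝ,
      HasDerivAt (fun s => ν (φ s x₀))
        (-(ν (φ t x₀)).comp (fderiv ℝ F (φ t x₀)) - ω (φ t x₀)) t ∧
      ν (φ t x₀) (F (φ t x₀)) = -ψ (φ t x₀)) := by
  have hφ : IsC1Flow F φ := ⟨hφ0, hφadd, hφode, fun t => (hφC1 t).differentiable one_ne_zero, hφD⟩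
  have hK : ∀ t, ∀ x ∈ K, φ t x ∈ K := fun t x hx => hφK t ▸ mem_image_of_mem (φ t) hx
  have hsplit : ∀ x ∈ K, IsSplitting (Vs x) (Vu x) (Vc x) (Ps x) (Pu x) (Pc x) :=
    fun x hx => ⟨hproj x hx, hdirect x hx⟩
  have hcomm : ∀ t, ∀ x ∈ K, ∀ v, _ := fun t x hx => (hsplit x hx).map_apply (hsplit _ (hK t x hx))
    (hequivs t x hx).le (hequivu t x hx).le (hequivc t x hx).le
  have hPc : ∀ x ∈ K, ∀ v, Pc x v = εc x v • F x := fun x hx =>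
    (hsplit x hx).apply_center_eq_smul (hVc x hx) (hεc x hx).1 (hεc x hx).2.1 (hεc x hx).2.2
  have hPF : ∀ x ∈ K, Ps x (F x) = 0 ∧ Pu x (F x) = 0 ∧ Pc x (F x) = F x := fun x hx =>
    (hsplit x hx).apply_of_mem_center (hVc x hx ▸ Submodule.mem_span_singleton_self (F x))
  obtain ⟨MP, hMP⟩ := hPbdd
  have hPb : ∀ x ∈ K, ‖Ps x‖ ≤ MP ∧ ‖Pu x‖ ≤ MP ∧ ‖Pc x‖ ≤ MP := fun x hx => by
    have := hMP x hx
    refine ⟨?_, ?_, ?_⟩ <;> linarith [norm_nonneg (Ps x), norm_nonneg (Pu x), norm_nonneg (Pc x)]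
  obtain ⟨Ms, hMs⟩ := exists_norm_projectedPullback_le_rpow (τ := fun t => t) hKc hωc hK
    ⟨MP, fun x hx => (hPb x hx).1⟩ (fun x hx v => ((hsplit x hx).decomp v).1)
    (fun t x hx v => (hcomm t x hx v).1) hyps hC.le hlam0
  obtain ⟨Mu, hMu⟩ := exists_norm_projectedPullback_le_rpow (τ := fun t => -t) hKc hωc hK
    ⟨MP, fun x hx => (hPb x hx).2.1⟩ (fun x hx v => ((hsplit x hx).decomp v).2.1)
    (fun t x hx v => (hcomm t x hx v).2.1) hypu hC.le hlam0
  have hIs : ∀ x ∈ K, ∀ a, IntegrableOn (projectedPullback ω Ps φ x) (Ioi a) := fun x hx =>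
    integrableOn_Ioi_of_norm_le_rpow (continuous_projectedPullback hφ hωc hPsc (hK · x hx))
      hlam0 hlam1 (hMs x hx)
  have hIu : ∀ x ∈ K, ∀ a, IntegrableOn (fun t => projectedPullback ω Pu φ x (-t)) (Ioi a) :=
    fun x hx => integrableOn_Ioi_of_norm_le_rpow
      ((continuous_projectedPullback hφ hωc hPuc (hK · x hx)).comp continuous_neg)
      hlam0 hlam1 (hMu x hx)
  refine ⟨fun x hx => ⟨hIs x hx 0, hIu x hx 0⟩, ?_, fun x₀ hx₀ t => ⟨?_, ?_⟩⟩
  · obtain ⟨M, hM⟩ := exists_norm_integral_sub_integral_sub_smul_le hlam0 hlam1 hMs hMu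
      (hKc.exists_bound_of_continuousOn hψc) (exists_norm_covector_le hKc hF.continuous hFne hPc
        ⟨MP, fun x hx => (hPb x hx).2.2⟩)
    exact ⟨M, fun x hx => (hν x hx).symm ▸ hM x hx⟩
  · have hεc_comp : ∀ t, (εc (φ t x₀)).comp (fderiv ℝ (φ t) x₀) = εc x₀ := fun t =>
      (hsplit x₀ hx₀).covector_comp_eq (hequivs t x₀ hx₀).le (hequivu t x₀ hx₀).le (hPc x₀ hx₀)
        (hεc _ (hK t x₀ hx₀)).1 (hεc _ (hK t x₀ hx₀)).2.1
        (by rw [hφ.fderiv_apply_vectorField]; exact (hεc _ (hK t x₀ hx₀)).2.2)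
    exact hasDerivAt_orbit_of_eq_integral_sub_integral hφ (hF.of_le (by norm_num)) hK hx₀ hωc
      hPsc hPuc hν hIs hIu (hψ x₀ hx₀) hεc_comp (fun t w => (hproj _ (hK t x₀ hx₀) w).2.2.2)
      (fun t => hPc _ (hK t x₀ hx₀)) t
  · have hy := hK t x₀ hx₀
    exact apply_vectorField_eq_neg hφ (hν _ hy) (hIs _ hy 0) (hIu _ hy 0)
      (fun s => (hPF _ (hK s _ hy)).1) (fun s => (hPF _ (hK s _ hy)).2.1) (hεc _ hy).2.2

theorem adjoint_shadowing_expansion_flow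
    {E : Type*} [NormedAddCommGroup E] [NormedSpace ℝ E] [FiniteDimensional ℝ E]
    (F : E → E) (hF : ContDiff ℝ 2 F)
    (φ : ℝ → E → E)
    (hφ0 : ∀ x : E, φ 0 x = x)
    (hφadd : ∀ (s t : ℝ) (x : E), φ (s + t) x = φ s (φ t x))
    (hφode : ∀ (x : E) (t : ℝ), HasDerivAt (fun s => φ s x) (F (φ t x)) t)
    (hφC1 : ∀ t : ℝ, ContDiff ℝ 1 (φ t))
    (hφD : Continuous fun p : ℝ × E => fderiv ℝ (φ p.1) p.2)
    (K : Set E) (hKc : IsCompact K) (hφK : ∀ t : ℝ, φ t '' K = K)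
    (hFne : ∀ x ∈ K, F x ≠ 0)
    (Vs Vu Vc : E → Submodule ℝ E)
    (hVc : ∀ x ∈ K, Vc x = Submodule.span ℝ {F x})
    (hequivs : ∀ (t : ℝ), ∀ x ∈ K, (Vs x).map (fderiv ℝ (φ t) x : E →ₗ[ℝ] E) = Vs (φ t x))
    (hequivu : ∀ (t : ℝ), ∀ x ∈ K, (Vu x).map (fderiv ℝ (φ t) x : E →ₗ[ℝ] E) = Vu (φ t x))
    (hequivc : ∀ (t : ℝ), ∀ x ∈ K, (Vc x).map (fderiv ℝ (φ t) x : E →ₗ[ℝ] E) = Vc (φ t x))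
    (C lam : ℝ) (hC : 0 < C) (hlam0 : 0 < lam) (hlam1 : lam < 1)
    (hyps : ∀ t : ℝ, 0 ≤ t → ∀ x ∈ K, ∀ v ∈ Vs x, ‖fderiv ℝ (φ t) x v‖ ≤ C * lam ^ t * ‖v‖)
    (hypu : ∀ t : ℝ, 0 ≤ t → ∀ x ∈ K, ∀ v ∈ Vu x, ‖fderiv ℝ (φ (-t)) x v‖ ≤ C * lam ^ t * ‖v‖)
    (Ps Pu Pc : E → E →L[ℝ] E)
    (hproj : ∀ x ∈ K, ∀ v : E, Ps x v ∈ Vs x ∧ Pu x v ∈ Vu x ∧ Pc x v ∈ Vc x ∧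
      Ps x v + Pu x v + Pc x v = v)
    (hdirect : ∀ x ∈ K, ∀ vs ∈ Vs x, ∀ vu ∈ Vu x, ∀ vc ∈ Vc x,
      vs + vu + vc = 0 → vs = 0 ∧ vu = 0 ∧ vc = 0)
    (hPbdd : ∃ M : ℝ, ∀ x ∈ K, ‖Ps x‖ + ‖Pu x‖ + ‖Pc x‖ ≤ M)
    (εc : E → E →L[ℝ] ℝ)
    (hεc : ∀ x ∈ K, (∀ v ∈ Vs x, εc x v = 0) ∧ (∀ v ∈ Vu x, εc x v = 0) ∧ εc x (F x) = 1)
    (hPsc : ContinuousOn Ps K) (hPuc : ContinuousOn Pu K) (hPcc : ContinuousOn Pc K)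
    (ω : E → E →L[ℝ] ℝ) (hωc : ContinuousOn ω K)
    (ψ : E → ℝ) (hψc : ContinuousOn ψ K)
    (hψ : ∀ x₀ ∈ K, ∀ t : ℝ,
      HasDerivAt (fun s => ψ (φ s x₀)) (ω (φ t x₀) (F (φ t x₀))) t)
    (ν : E → E →L[ℝ] ℝ)
    (hν : ∀ x ∈ K, ν x =
      (∫ t in Ioi (0:ℝ), ((ω (φ t x)).comp (Ps (φ t x))).comp (fderiv ℝ (φ t) x)) -
      (∫ t in Ioi (0:ℝ), ((ω (φ (-t) x)).comp (Pu (φ (-t) x))).comp (fderiv ℝ (φ (-t)) x)) -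
      ψ x • εc x) :
    (∀ x ∈ K,
      IntegrableOn (fun t : ℝ => ((ω (φ t x)).comp (Ps (φ t x))).comp (fderiv ℝ (φ t) x))
        (Ioi (0:ℝ)) ∧
      IntegrableOn (fun t : ℝ => ((ω (φ (-t) x)).comp (Pu (φ (-t) x))).comp (fderiv ℝ (φ (-t)) x))
        (Ioi (0:ℝ))) ∧
    (∃ M : ℝ, ∀ x ∈ K, ‖ν x‖ ≤ M) ∧
    (∀ x₀ ∈ K, ∀ t : ℝ,
      HasDerivAt (fun s => ν (φ s x₀))
        (-(ν (φ t x₀)).comp (fderiv ℝ F (φ t x₀)) - ω (φ t x₀)) t ∧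
      ν (φ t x₀) (F (φ t x₀)) = -ψ (φ t x₀)) :=
  adjoint_shadowing_expansion_flow_general F hF φ hφ0 hφadd hφode hφC1 hφD K hKc hφK hFne Vs Vu Vc
    hVc hequivs hequivu hequivc C lam hC hlam0 hlam1 hyps hypu Ps Pu Pc hproj hdirect hPbdd εc hεc
    hPsc hPuc ω hωc ψ hψc hψ ν hν
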